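/- arXiv:1810.06316 — 7 statements merged into one kernel-verified Lean document; each statement's English description precedes it below -/
import Mathlib

section
/- Let X and Y be Banach spaces, D ⊆ X nonempty, and F : D → Y. Suppose there is a family of seminorms (p_n)_{n∈ℕ} on X and positive reals (ν_n) such that for each n: (a) p_n^⊥ := ‖·‖_X − p_n is a seminorm on X; (b) p_n(f₁ − f₂) ≤ ν_n ‖F(f₁) − F(f₂)‖_Y for all f₁, f₂ ∈ D. Then for every f, f† ∈ D and every n ∈ ℕ: ‖f − f†‖_X − ‖f‖_X + ‖f†‖_X ≤ 2 (ν_n ‖F(f) − F(f†)‖_Y + p_n^⊥(f†)). -/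
/-- general strategy for variational source conditions with
1-homogeneous penalties (Proposition `vari:theorem`, key inequality). -/
theorem stmt0 {X Y : Type*} [NormedAddCommGroup X] [NormedSpace ℝ X] [CompleteSpace X]
    [NormedAddCommGroup Y] [NormedSpace ℝ Y] [CompleteSpace Y]
    (D : Set X) (hD : D.Nonempty) (F : X → Y)
    (p : ℕ → X → ℝ) (ν : ℕ → ℝ) (hν : ∀ n, 0 < ν n)
    -- each `p n` is a seminorm
    (hp_nonneg : ∀ n f, 0 ≤ p n f)
    (hp_add : ∀ n f g, p n (f + g) ≤ p n f + p n g)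
    (hp_hom : ∀ n (c : ℝ) (f : X), p n (c • f) = |c| * p n f)
    -- `p n ^⊥ = ‖·‖ - p n` is a seminorm
    (hperp_nonneg : ∀ n f, 0 ≤ ‖f‖ - p n f)
    (hperp_add : ∀ n f g, ‖f + g‖ - p n (f + g) ≤ (‖f‖ - p n f) + (‖g‖ - p n g))
    (hperp_hom : ∀ n (c : ℝ) (f : X), ‖c • f‖ - p n (c • f) = |c| * (‖f‖ - p n f))
    -- operator condition
    (hop : ∀ n, ∀ f₁ ∈ D, ∀ f₂ ∈ D, p n (f₁ - f₂) ≤ ν n * ‖F f₁ - F f₂‖) :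
    ∀ f ∈ D, ∀ fdag ∈ D, ∀ n : ℕ,
      ‖f - fdag‖ - ‖f‖ + ‖fdag‖ ≤ 2 * (ν n * ‖F f - F fdag‖ + (‖fdag‖ - p n fdag)) := by
  intro f hf fdag hfdag n
  have h1 := hperp_add n f (-fdag)
  rw [← sub_eq_add_neg] at h1
  have h2 := hperp_hom n (-1) fdag
  rw [neg_one_smul] at h2
  simp only [abs_neg, abs_one, one_mul] at h2
  have h3 := hp_add n (fdag - f) f
  rw [sub_add_cancel] at h3
  have h7 := hp_hom n (-1) (f - fdag)
  rw [neg_one_smul, neg_sub] at h7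
  simp only [abs_neg, abs_one, one_mul] at h7
  have h4 := hop n f hf fdag hfdag
  have h5 := hp_hom n (-1) fdag
  rw [neg_one_smul] at h5
  simp only [abs_neg, abs_one, one_mul] at h5
  have h6 : ‖-fdag‖ = ‖fdag‖ := norm_neg fdag
  linarith
end

section
/- Let X, Y be Banach spaces, D ⊆ X convex, and F : D → Y Fréchet differentiable with derivative F'[f] at each f ∈ D. Assume there is a constant L̃ > 0 and a point f† ∈ D such that (1/L̃)‖h‖_X ≤ ‖F'[f†]h‖_Y ≤ L̃‖h‖_X for all h ∈ X, and for all f₁, f₂ ∈ D there exists a bounded linear operator R(f₁,f₂) on Y with F'[f₁] = R(f₁,f₂) ∘ F'[f₂] and ‖I − R(f₁,f₂)‖ ≤ 1/2. Then for all f₁, f₂ ∈ D: (1/(2L̃))‖f₁ − f₂‖_X ≤ ‖F(f₁) − F(f₂)‖_Y ≤ (3/2)L̃‖f₁ − f₂‖_X. -/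
/-!
Write `v = F'[f†](f₁ - f₂)`. Range invariance gives `F'[f](f₁ - f₂) = R(f, f†) v`, which lies
within `‖v‖ / 2` of `v` for every `f ∈ D`. The mean value inequality along the segment from `f₂`
to `f₁` then puts `F f₁ - F f₂` within `‖v‖ / 2` of `v`, so `‖F f₁ - F f₂‖` is between `‖v‖ / 2`
and `3 ‖v‖ / 2`, and `‖v‖` is comparable to `‖f₁ - f₂‖` by the two-sided bound at `f†`.
-/

open Set

theorem Convex.norm_image_sub_sub_le_of_norm_fderiv_apply_sub_le {E G : Type*}
    [NormedAddCommGroup E] [NormedSpace ℝ E] [NormedAddCommGroup G] [NormedSpace ℝ G]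
    {s : Set E} (hs : Convex ℝ s) {f : E → G} {f' : E → E →L[ℝ] G}
    (hf : ∀ z ∈ s, HasFDerivWithinAt f (f' z) s z)
    {x y : E} (hx : x ∈ s) (hy : y ∈ s) {v : G} {C : ℝ}
    (bound : ∀ z ∈ s, ‖f' z (y - x) - v‖ ≤ C) : ‖f y - f x - v‖ ≤ C := by
  set g := (AffineMap.lineMap x y : ℝ → E)
  have segm : MapsTo g (Icc 0 1) s := hs.mapsTo_lineMap hx hy
  have hD : ∀ t ∈ Icc (0 : ℝ) 1, HasDerivWithinAt (fun t => f (g t) - t • v)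
      (f' (g t) (y - x) - v) (Icc 0 1) t := fun t ht => by
    have hfg := (hf (g t) (segm ht)).comp_hasDerivWithinAt t
      AffineMap.hasDerivWithinAt_lineMap segm
    simpa using hfg.fun_sub ((hasDerivWithinAt_id t _).smul_const v)
  simpa [g, sub_sub, add_comm] using norm_image_sub_le_of_norm_deriv_le_segment_01' hD
    fun t ht => bound _ (segm (Ico_subset_Icc_self ht))

theorem ContinuousLinearMap.norm_apply_sub_self_le {𝕜 A : Type*} [NontriviallyNormedField 𝕜]
    [SeminormedAddCommGroup A] [NormedSpace 𝕜 A] {T : A →L[𝕜] A} {c : ℝ}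
    (hT : ‖ContinuousLinearMap.id 𝕜 A - T‖ ≤ c) (v : A) : ‖T v - v‖ ≤ c * ‖v‖ := by
  rw [← norm_neg, neg_sub]
  exact ((ContinuousLinearMap.id 𝕜 A - T).le_opNorm v).trans
    (mul_le_mul_of_nonneg_right hT (norm_nonneg v))

theorem norm_bounds_of_norm_sub_le_half {A : Type*} [SeminormedAddCommGroup A] {w v : A}
    (h : ‖w - v‖ ≤ 1 / 2 * ‖v‖) : 1 / 2 * ‖v‖ ≤ ‖w‖ ∧ ‖w‖ ≤ 3 / 2 * ‖v‖ := by
  constructor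
  · linarith [norm_sub_norm_le v w, norm_sub_rev v w]
  · linarith [norm_le_norm_add_norm_sub' w v]

theorem stmt1_general {X Y : Type*} [NormedAddCommGroup X] [NormedSpace ℝ X]
    [NormedAddCommGroup Y] [NormedSpace ℝ Y]
    (D : Set X) (hDconv : Convex ℝ D)
    (F : X → Y) (F' : X → X →L[ℝ] Y)
    (hF : ∀ f ∈ D, HasFDerivWithinAt F (F' f) D f)
    (L : ℝ) (fdag : X) (hfdag : fdag ∈ D)
    (hlow : ∀ h : X, (1 / L) * ‖h‖ ≤ ‖F' fdag h‖)
    (hup : ∀ h : X, ‖F' fdag h‖ ≤ L * ‖h‖)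
    (R : X → X → Y →L[ℝ] Y)
    (hR : ∀ f₁ ∈ D, ∀ f₂ ∈ D, F' f₁ = (R f₁ f₂).comp (F' f₂))
    (hRnorm : ∀ f₁ ∈ D, ∀ f₂ ∈ D, ‖ContinuousLinearMap.id ℝ Y - R f₁ f₂‖ ≤ 1 / 2) :
    ∀ f₁ ∈ D, ∀ f₂ ∈ D,
      (1 / (2 * L)) * ‖f₁ - f₂‖ ≤ ‖F f₁ - F f₂‖ ∧
      ‖F f₁ - F f₂‖ ≤ (3 / 2) * L * ‖f₁ - f₂‖ := by
  intro f₁ hf₁ f₂ hf₂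
  set v := F' fdag (f₁ - f₂)
  have hmvt : ‖F f₁ - F f₂ - v‖ ≤ 1 / 2 * ‖v‖ :=
    hDconv.norm_image_sub_sub_le_of_norm_fderiv_apply_sub_le hF hf₂ hf₁ fun f hf => by
      rw [hR f hf fdag hfdag]
      exact (R f fdag).norm_apply_sub_self_le (hRnorm f hf fdag hfdag) v
  obtain ⟨hge, hle⟩ := norm_bounds_of_norm_sub_le_half hmvt
  constructor
  · calc 1 / (2 * L) * ‖f₁ - f₂‖ = 1 / 2 * (1 / L * ‖f₁ - f₂‖) := by ring
      _ ≤ 1 / 2 * ‖v‖ := by gcongr; exact hlow _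
      _ ≤ ‖F f₁ - F f₂‖ := hge
  · calc ‖F f₁ - F f₂‖ ≤ 3 / 2 * ‖v‖ := hle
      _ ≤ 3 / 2 * (L * ‖f₁ - f₂‖) := by gcongr; exact hup _
      _ = 3 / 2 * L * ‖f₁ - f₂‖ := by ring

/-- two-sided Lipschitz estimate for nonlinear operators under the
range invariance condition and a two-sided bound on the derivative at f†. -/
theorem stmt1 {X Y : Type*} [NormedAddCommGroup X] [NormedSpace ℝ X] [CompleteSpace X]
    [NormedAddCommGroup Y] [NormedSpace ℝ Y] [CompleteSpace Y]
    (D : Set X) (hDconv : Convex ℝ D)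
    (F : X → Y) (F' : X → X →L[ℝ] Y)
    (hF : ∀ f ∈ D, HasFDerivWithinAt F (F' f) D f)
    (L : ℝ) (hL : 0 < L) (fdag : X) (hfdag : fdag ∈ D)
    (hlow : ∀ h : X, (1 / L) * ‖h‖ ≤ ‖F' fdag h‖)
    (hup : ∀ h : X, ‖F' fdag h‖ ≤ L * ‖h‖)
    (R : X → X → Y →L[ℝ] Y)
    (hR : ∀ f₁ ∈ D, ∀ f₂ ∈ D, F' f₁ = (R f₁ f₂).comp (F' f₂))
    (hRnorm : ∀ f₁ ∈ D, ∀ f₂ ∈ D, ‖ContinuousLinearMap.id ℝ Y - R f₁ f₂‖ ≤ 1 / 2) :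
    ∀ f₁ ∈ D, ∀ f₂ ∈ D,
      (1 / (2 * L)) * ‖f₁ - f₂‖ ≤ ‖F f₁ - F f₂‖ ∧
      ‖F f₁ - F f₂‖ ≤ (3 / 2) * L * ‖f₁ - f₂‖ :=
  stmt1_general D hDconv F F' hF L fdag hfdag hlow hup R hR hRnorm
end

section
/- Under the range-invariance assumption (F'[f₁] = R(f₁,f₂) F'[f₂] with ‖I − R(f₁,f₂)‖ ≤ 1/2 for all f₁, f₂ in the convex set D), for all f₁, f₂ ∈ D one has (1/2)‖F'[f†](f₁−f₂)‖_Y ≤ ‖F(f₁)−F(f₂)‖_Y ≤ (3/2)‖F'[f†](f₁−f₂)‖_Y, where f† ∈ D is fixed. -/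
/-!
Put `v = F'[f†](f₁ - f₂)`. By range invariance the derivative of
`t ↦ F(f₂ + t (f₁ - f₂)) - t v` is `(R(f, f†) - I) v` for a point `f` of the segment, of norm at
most `‖v‖ / 2`. The mean value inequality gives `‖F f₁ - F f₂ - v‖ ≤ ‖v‖ / 2`, and both bounds
follow by the triangle inequality.
-/

open Set

theorem Convex.norm_image_sub_sub_le_of_norm_hasFDerivWithinAt_apply_sub_le
    {E G : Type*} [NormedAddCommGroup E] [NormedSpace ℝ E]
    [NormedAddCommGroup G] [NormedSpace ℝ G]
    {s : Set E} (hs : Convex ℝ s) {f : E → G} {f' : E → E →L[ℝ] G}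
    (hf : ∀ z ∈ s, HasFDerivWithinAt f (f' z) s z) {x y : E} (hx : x ∈ s) (hy : y ∈ s)
    (w : G) {C : ℝ} (hC : ∀ z ∈ segment ℝ x y, ‖f' z (y - x) - w‖ ≤ C) :
    ‖f y - f x - w‖ ≤ C := by
  set γ : ℝ → E := fun t => x + t • (y - x)
  have hγs : MapsTo γ (Icc 0 1) s := fun t ht => hs.add_smul_sub_mem hx hy ht
  have hγseg : MapsTo γ (Icc 0 1) (segment ℝ x y) := fun t ht =>
    (convex_segment x y).add_smul_sub_mem (left_mem_segment ℝ x y) (right_mem_segment ℝ x y) ht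
  have hderiv : ∀ t ∈ Icc (0 : ℝ) 1, HasDerivWithinAt (fun t => f (γ t) - t • w)
      (f' (γ t) (y - x) - w) (Icc 0 1) t := by
    intro t ht
    have hid : HasDerivWithinAt (fun t : ℝ => t) 1 (Icc 0 1) t := hasDerivWithinAt_id t _
    have hγ : HasDerivWithinAt γ (y - x) (Icc 0 1) t := by
      simpa only [one_smul] using (hid.smul_const (y - x)).const_add x
    simpa only [one_smul, Function.comp_apply] using
      ((hf _ (hγs ht)).comp_hasDerivWithinAt t hγ hγs).fun_sub (hid.smul_const w)
  have hmean := norm_image_sub_le_of_norm_deriv_le_segment' hderiv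
    (fun t ht => hC _ (hγseg (Ico_subset_Icc_self ht))) 1 (right_mem_Icc.2 zero_le_one)
  simpa [γ, sub_right_comm] using hmean

theorem ContinuousLinearMap.norm_apply_sub_self_le_of_norm_id_sub_le
    {E : Type*} [NormedAddCommGroup E] [NormedSpace ℝ E] {T : E →L[ℝ] E} {c : ℝ}
    (hT : ‖ContinuousLinearMap.id ℝ E - T‖ ≤ c) (v : E) : ‖T v - v‖ ≤ c * ‖v‖ :=
  calc ‖T v - v‖ = ‖(ContinuousLinearMap.id ℝ E - T) v‖ := by simp [norm_sub_rev]
    _ ≤ ‖ContinuousLinearMap.id ℝ E - T‖ * ‖v‖ := le_opNorm _ v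
    _ ≤ c * ‖v‖ := by gcongr

theorem half_norm_le_norm_and_norm_le_of_norm_sub_le {E : Type*} [SeminormedAddCommGroup E]
    {a v : E} (h : ‖a - v‖ ≤ 1 / 2 * ‖v‖) :
    1 / 2 * ‖v‖ ≤ ‖a‖ ∧ ‖a‖ ≤ 3 / 2 * ‖v‖ := by
  have hv := norm_le_norm_add_norm_sub' a v
  have ha := norm_le_norm_add_norm_sub a v
  constructor <;> linarith

theorem stmt2_general {X Y : Type*} [NormedAddCommGroup X] [NormedSpace ℝ X]
    [NormedAddCommGroup Y] [NormedSpace ℝ Y]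
    (D : Set X) (hDconv : Convex ℝ D)
    (F : X → Y) (F' : X → X →L[ℝ] Y)
    (hF : ∀ f ∈ D, HasFDerivWithinAt F (F' f) D f)
    (fdag : X) (hfdag : fdag ∈ D)
    (R : X → X → Y →L[ℝ] Y)
    (hR : ∀ f₁ ∈ D, ∀ f₂ ∈ D, F' f₁ = (R f₁ f₂).comp (F' f₂))
    (hRnorm : ∀ f₁ ∈ D, ∀ f₂ ∈ D, ‖ContinuousLinearMap.id ℝ Y - R f₁ f₂‖ ≤ 1 / 2) :
    ∀ f₁ ∈ D, ∀ f₂ ∈ D,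
      (1 / 2) * ‖F' fdag (f₁ - f₂)‖ ≤ ‖F f₁ - F f₂‖ ∧
      ‖F f₁ - F f₂‖ ≤ (3 / 2) * ‖F' fdag (f₁ - f₂)‖ := by
  intro f₁ hf₁ f₂ hf₂
  apply half_norm_le_norm_and_norm_le_of_norm_sub_le
  refine hDconv.norm_image_sub_sub_le_of_norm_hasFDerivWithinAt_apply_sub_le hF hf₂ hf₁ _
    fun z hz => ?_
  have hz : z ∈ D := hDconv.segment_subset hf₂ hf₁ hz
  rw [hR z hz fdag hfdag]
  exact (R z fdag).norm_apply_sub_self_le_of_norm_id_sub_le (hRnorm z hz fdag hfdag) _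

/-- under the range invariance condition the difference of the
operator values is comparable to the linearization at a fixed point f†. -/
theorem stmt2 {X Y : Type*} [NormedAddCommGroup X] [NormedSpace ℝ X] [CompleteSpace X]
    [NormedAddCommGroup Y] [NormedSpace ℝ Y] [CompleteSpace Y]
    (D : Set X) (hDconv : Convex ℝ D)
    (F : X → Y) (F' : X → X →L[ℝ] Y)
    (hF : ∀ f ∈ D, HasFDerivWithinAt F (F' f) D f)
    (fdag : X) (hfdag : fdag ∈ D)
    (R : X → X → Y →L[ℝ] Y)
    (hR : ∀ f₁ ∈ D, ∀ f₂ ∈ D, F' f₁ = (R f₁ f₂).comp (F' f₂))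
    (hRnorm : ∀ f₁ ∈ D, ∀ f₂ ∈ D, ‖ContinuousLinearMap.id ℝ Y - R f₁ f₂‖ ≤ 1 / 2) :
    ∀ f₁ ∈ D, ∀ f₂ ∈ D,
      (1 / 2) * ‖F' fdag (f₁ - f₂)‖ ≤ ‖F f₁ - F f₂‖ ∧
      ‖F f₁ - F f₂‖ ≤ (3 / 2) * ‖F' fdag (f₁ - f₂)‖ :=
  stmt2_general D hDconv F F' hF fdag hfdag R hR hRnorm
end

section
/- Let p ∈ [1,2], a > 0, and let F : D → Y with nonempty D ⊆ B⁰_{p,1}. Define the seminorms p_n(f) := Σ_{j=0}^n 2^{jd(1/2 − 1/p)} ‖Q_j f‖_p. Then the following are equivalent: (i) there exists L₁ > 0 with ‖f₁ − f₂‖_{−a,p,∞} ≤ L₁ ‖F(f₁) − F(f₂)‖_Y for all f₁, f₂ ∈ D; (ii) there exists L_ν > 0 with p_n(f₁ − f₂) ≤ L_ν 2^{na} ‖F(f₁) − F(f₂)‖_Y for all f₁, f₂ ∈ D and all n ∈ ℕ. Moreover (i) with constant L₁ implies (ii) with L_ν = L₁ 2^a/(2^a − 1), and (ii) implies (i) with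 L₁ = L_ν. -/
open Real

/-- ℓ^p norm on a finite block, p ∈ [1,∞). -/
noncomputable def blockNorm {Λ : Type*} [Fintype Λ] (p : ℝ) (v : Λ → ℝ) : ℝ :=
  (∑ k, |v k| ^ p) ^ (1 / p)

/-- weight 2^{jd(1/2 − 1/p)}. -/
noncomputable def wt (d : ℕ) (p : ℝ) (j : ℕ) : ℝ :=
  (2 : ℝ) ^ ((j : ℝ) * d * (1 / 2 - 1 / p))

/-- equivalence of the operator condition
‖f₁−f₂‖_{−a,p,∞} ≤ L₁‖F f₁ − F f₂‖ with the seminorm condition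
p_n(f₁−f₂) ≤ L_ν 2^{na} ‖F f₁ − F f₂‖, with explicit constants. -/
theorem stmt3 {Λ : ℕ → Type*} [∀ j, Fintype (Λ j)] {Y : Type*} [NormedAddCommGroup Y]
    (d : ℕ) (hd : 1 ≤ d) (p a : ℝ) (hp1 : 1 ≤ p) (hp2 : p ≤ 2) (ha : 0 < a)
    (D : Set (∀ j, Λ j → ℝ)) (hD : D.Nonempty) (F : (∀ j, Λ j → ℝ) → Y) :
    ((∃ L₁ > (0:ℝ), ∀ f₁ ∈ D, ∀ f₂ ∈ D, ∀ j : ℕ,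
        (2:ℝ) ^ (-(j:ℝ) * a) * wt d p j * blockNorm p (f₁ j - f₂ j) ≤ L₁ * ‖F f₁ - F f₂‖) ↔
     (∃ Lν > (0:ℝ), ∀ f₁ ∈ D, ∀ f₂ ∈ D, ∀ n : ℕ,
        (∑ j ∈ Finset.range (n + 1), wt d p j * blockNorm p (f₁ j - f₂ j)) ≤
          Lν * (2:ℝ) ^ ((n:ℝ) * a) * ‖F f₁ - F f₂‖))
    ∧
    (∀ L₁ > (0:ℝ), (∀ f₁ ∈ D, ∀ f₂ ∈ D, ∀ j : ℕ,
        (2:ℝ) ^ (-(j:ℝ) * a) * wt d p j * blockNorm p (f₁ j - f₂ j) ≤ L₁ * ‖F f₁ - F f₂‖) →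
      (∀ f₁ ∈ D, ∀ f₂ ∈ D, ∀ n : ℕ,
        (∑ j ∈ Finset.range (n + 1), wt d p j * blockNorm p (f₁ j - f₂ j)) ≤
          (L₁ * (2:ℝ) ^ a / ((2:ℝ) ^ a - 1)) * (2:ℝ) ^ ((n:ℝ) * a) * ‖F f₁ - F f₂‖))
    ∧
    (∀ Lν > (0:ℝ), (∀ f₁ ∈ D, ∀ f₂ ∈ D, ∀ n : ℕ,
        (∑ j ∈ Finset.range (n + 1), wt d p j * blockNorm p (f₁ j - f₂ j)) ≤
          Lν * (2:ℝ) ^ ((n:ℝ) * a) * ‖F f₁ - F f₂‖) →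
      (∀ f₁ ∈ D, ∀ f₂ ∈ D, ∀ j : ℕ,
        (2:ℝ) ^ (-(j:ℝ) * a) * wt d p j * blockNorm p (f₁ j - f₂ j) ≤ Lν * ‖F f₁ - F f₂‖)) := by
  have hb : ∀ j (v : Λ j → ℝ), 0 ≤ blockNorm p v := fun j v =>
    Real.rpow_nonneg (Finset.sum_nonneg fun k _ => Real.rpow_nonneg (abs_nonneg _) _) _
  have hwt : ∀ j, 0 < wt d p j := fun j => Real.rpow_pos_of_pos two_pos _
  have hc1 : (1:ℝ) < (2:ℝ) ^ a := by
    rw [show (1:ℝ) = (2:ℝ) ^ (0:ℝ) by simp]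
    exact Real.rpow_lt_rpow_left_iff one_lt_two |>.mpr ha
  have hcpos : (0:ℝ) < (2:ℝ) ^ a - 1 := by linarith
  have hpowj : ∀ j : ℕ, (2:ℝ) ^ ((j:ℝ) * a) = ((2:ℝ) ^ a) ^ j := by
    intro j
    rw [mul_comm, Real.rpow_mul (by norm_num : (0:ℝ) ≤ 2), Real.rpow_natCast]
  have hcancel : ∀ j : ℕ, (2:ℝ) ^ ((j:ℝ) * a) * (2:ℝ) ^ (-(j:ℝ) * a) = 1 := by
    intro j
    rw [← Real.rpow_add two_pos]; norm_num
  have fwd : ∀ L₁ > (0:ℝ), (∀ f₁ ∈ D, ∀ f₂ ∈ D, ∀ j : ℕ,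
      (2:ℝ) ^ (-(j:ℝ) * a) * wt d p j * blockNorm p (f₁ j - f₂ j) ≤ L₁ * ‖F f₁ - F f₂‖) →
      (∀ f₁ ∈ D, ∀ f₂ ∈ D, ∀ n : ℕ,
        (∑ j ∈ Finset.range (n + 1), wt d p j * blockNorm p (f₁ j - f₂ j)) ≤
          (L₁ * (2:ℝ) ^ a / ((2:ℝ) ^ a - 1)) * (2:ℝ) ^ ((n:ℝ) * a) * ‖F f₁ - F f₂‖) := by
    intro L₁ hL₁ h f₁ hf₁ f₂ hf₂ n
    set N := ‖F f₁ - F f₂‖ with hN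
    have hN0 : 0 ≤ N := norm_nonneg _
    have step : ∀ j ∈ Finset.range (n + 1),
        wt d p j * blockNorm p (f₁ j - f₂ j) ≤ ((2:ℝ) ^ a) ^ j * (L₁ * N) := by
      intro j _
      have h1 := h f₁ hf₁ f₂ hf₂ j
      have h2 : (2:ℝ) ^ ((j:ℝ) * a) * ((2:ℝ) ^ (-(j:ℝ) * a) * wt d p j *
          blockNorm p (f₁ j - f₂ j)) ≤ (2:ℝ) ^ ((j:ℝ) * a) * (L₁ * N) :=
        mul_le_mul_of_nonneg_left h1 (Real.rpow_nonneg (by norm_num) _)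
      calc wt d p j * blockNorm p (f₁ j - f₂ j)
          = (2:ℝ) ^ ((j:ℝ) * a) * ((2:ℝ) ^ (-(j:ℝ) * a) * wt d p j *
            blockNorm p (f₁ j - f₂ j)) := by
            rw [show (2:ℝ) ^ ((j:ℝ) * a) * ((2:ℝ) ^ (-(j:ℝ) * a) * wt d p j *
              blockNorm p (f₁ j - f₂ j)) = ((2:ℝ) ^ ((j:ℝ) * a) * (2:ℝ) ^ (-(j:ℝ) * a)) *
              (wt d p j * blockNorm p (f₁ j - f₂ j)) by ring, hcancel j, one_mul]
        _ ≤ (2:ℝ) ^ ((j:ℝ) * a) * (L₁ * N) := h2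
        _ = ((2:ℝ) ^ a) ^ j * (L₁ * N) := by rw [hpowj j]
    have hsum : (∑ j ∈ Finset.range (n + 1), wt d p j * blockNorm p (f₁ j - f₂ j)) ≤
        (∑ j ∈ Finset.range (n + 1), ((2:ℝ) ^ a) ^ j) * (L₁ * N) := by
      rw [Finset.sum_mul]
      exact Finset.sum_le_sum step
    have hgeom : (∑ j ∈ Finset.range (n + 1), ((2:ℝ) ^ a) ^ j) =
        (((2:ℝ) ^ a) ^ (n + 1) - 1) / ((2:ℝ) ^ a - 1) := geom_sum_eq (by linarith) _
    have hbound : (∑ j ∈ Finset.range (n + 1), ((2:ℝ) ^ a) ^ j) ≤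
        (2:ℝ) ^ a * (2:ℝ) ^ ((n:ℝ) * a) / ((2:ℝ) ^ a - 1) := by
      rw [hgeom]
      apply (div_le_div_iff_of_pos_right hcpos).mpr
      have : ((2:ℝ) ^ a) ^ (n + 1) = (2:ℝ) ^ a * (2:ℝ) ^ ((n:ℝ) * a) := by
        rw [hpowj n, pow_succ, mul_comm]
      linarith [this ▸ (by linarith : ((2:ℝ)^a)^(n+1) - 1 ≤ ((2:ℝ)^a)^(n+1))]
    calc (∑ j ∈ Finset.range (n + 1), wt d p j * blockNorm p (f₁ j - f₂ j))
        ≤ (∑ j ∈ Finset.range (n + 1), ((2:ℝ) ^ a) ^ j) * (L₁ * N) := hsum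
      _ ≤ ((2:ℝ) ^ a * (2:ℝ) ^ ((n:ℝ) * a) / ((2:ℝ) ^ a - 1)) * (L₁ * N) :=
          mul_le_mul_of_nonneg_right hbound (by positivity)
      _ = (L₁ * (2:ℝ) ^ a / ((2:ℝ) ^ a - 1)) * (2:ℝ) ^ ((n:ℝ) * a) * N := by
          ring
  have bwd : ∀ Lν > (0:ℝ), (∀ f₁ ∈ D, ∀ f₂ ∈ D, ∀ n : ℕ,
      (∑ j ∈ Finset.range (n + 1), wt d p j * blockNorm p (f₁ j - f₂ j)) ≤
        Lν * (2:ℝ) ^ ((n:ℝ) * a) * ‖F f₁ - F f₂‖) →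
      (∀ f₁ ∈ D, ∀ f₂ ∈ D, ∀ j : ℕ,
        (2:ℝ) ^ (-(j:ℝ) * a) * wt d p j * blockNorm p (f₁ j - f₂ j) ≤ Lν * ‖F f₁ - F f₂‖) := by
    intro Lν hLν h f₁ hf₁ f₂ hf₂ j
    have hsingle : wt d p j * blockNorm p (f₁ j - f₂ j) ≤
        ∑ i ∈ Finset.range (j + 1), wt d p i * blockNorm p (f₁ i - f₂ i) :=
      Finset.single_le_sum (f := fun i => wt d p i * blockNorm p (f₁ i - f₂ i))
        (fun i _ => mul_nonneg (hwt i).le (hb i _))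
        (Finset.self_mem_range_succ j)
    have h1 := (hsingle.trans (h f₁ hf₁ f₂ hf₂ j))
    have h2 : (2:ℝ) ^ (-(j:ℝ) * a) * (wt d p j * blockNorm p (f₁ j - f₂ j)) ≤
        (2:ℝ) ^ (-(j:ℝ) * a) * (Lν * (2:ℝ) ^ ((j:ℝ) * a) * ‖F f₁ - F f₂‖) :=
      mul_le_mul_of_nonneg_left h1 (Real.rpow_nonneg (by norm_num) _)
    calc (2:ℝ) ^ (-(j:ℝ) * a) * wt d p j * blockNorm p (f₁ j - f₂ j)
        = (2:ℝ) ^ (-(j:ℝ) * a) * (wt d p j * blockNorm p (f₁ j - f₂ j)) := by ring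
      _ ≤ (2:ℝ) ^ (-(j:ℝ) * a) * (Lν * (2:ℝ) ^ ((j:ℝ) * a) * ‖F f₁ - F f₂‖) := h2
      _ = ((2:ℝ) ^ ((j:ℝ) * a) * (2:ℝ) ^ (-(j:ℝ) * a)) * (Lν * ‖F f₁ - F f₂‖) := by ring
      _ = Lν * ‖F f₁ - F f₂‖ := by rw [hcancel j, one_mul]
  refine ⟨⟨fun ⟨L₁, hL₁, h⟩ => ⟨L₁ * (2:ℝ) ^ a / ((2:ℝ) ^ a - 1), by positivity,
    fwd L₁ hL₁ h⟩, fun ⟨Lν, hLν, h⟩ => ⟨Lν, hLν, bwd Lν hLν h⟩⟩, fwd, bwd⟩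
end

section
/- Let T : ℓ¹ → Y be a bounded linear injective operator to a Banach space Y, and let P_n : ℓ¹ → ℓ¹ be the projection onto the first n coordinates. Then the condition 'for all n ∈ ℕ there exists ν_n > 0 with ‖P_n x‖_{ℓ¹} ≤ ν_n ‖T x‖_Y for all x ∈ ℓ¹' holds if and only if every standard unit sequence e_n ∈ ℓ^∞ ≅ (ℓ¹)* lies in the range of the adjoint T* : Y* → ℓ^∞. -/
open NormedSpace

/-!
A functional `φ` is of the form `ψ ∘ T` with `ψ ∈ Y*` exactly when `‖φ x‖ ≤ C ‖T x‖`: such a bound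
forces `φ` to vanish on `ker T`, so `φ` descends to a bounded functional on the range of `T`, which
Hahn–Banach extends to all of `Y`. Apply this to the coordinate functionals `x ↦ x n`, and note that
`∑ i < n, |x i|` is bounded by a multiple of `‖T x‖` iff each `|x i|` is.
-/

theorem LinearMap.exists_strongDual_comp_eq_iff {𝕜 E F : Type*} [NontriviallyNormedField 𝕜]
    [IsRCLikeNormedField 𝕜] [AddCommGroup E] [Module 𝕜 E] [SeminormedAddCommGroup F]
    [NormedSpace 𝕜 F] (f : E →ₗ[𝕜] F) (φ : E →ₗ[𝕜] 𝕜) :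
    (∃ ψ : StrongDual 𝕜 F, ∀ x, ψ (f x) = φ x) ↔ ∃ C, ∀ x, ‖φ x‖ ≤ C * ‖f x‖ := by
  constructor
  · rintro ⟨ψ, hψ⟩
    exact ⟨‖ψ‖, fun x => hψ x ▸ ψ.le_opNorm (f x)⟩
  · rintro ⟨C, hC⟩
    have hker : LinearMap.ker f ≤ LinearMap.ker φ := fun x hx => by
      simpa [LinearMap.mem_ker.mp hx] using hC x
    let g : LinearMap.range f →ₗ[𝕜] 𝕜 :=
      (LinearMap.ker f).liftQ φ hker ∘ₗ f.quotKerEquivRange.symm.toLinearMap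
    have hg : ∀ x, g ⟨f x, LinearMap.mem_range_self f x⟩ = φ x := fun x => by simp [g]
    have hbound : ∀ y, ‖g y‖ ≤ C * ‖y‖ := by
      rintro ⟨_, x, rfl⟩
      exact (hg x).symm ▸ hC x
    obtain ⟨ψ, hψ, -⟩ := exists_extension_norm_eq _ (g.mkContinuous C hbound)
    exact ⟨ψ, fun x => (hψ ⟨f x, _⟩).trans (hg x)⟩

theorem exists_sum_range_abs_le_iff {α : Type*} (a : α → ℕ → ℝ) (b : α → ℝ) (hb : ∀ x, 0 ≤ b x) :
    (∀ n, ∃ ν, 0 < ν ∧ ∀ x, ∑ i ∈ Finset.range n, |a x i| ≤ ν * b x) ↔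
      ∀ n, ∃ C, ∀ x, |a x n| ≤ C * b x := by
  constructor
  · intro h n
    obtain ⟨ν, -, hν⟩ := h (n + 1)
    refine ⟨ν, fun x => le_trans ?_ (hν x)⟩
    exact Finset.single_le_sum (f := fun i => |a x i|) (fun i _ => abs_nonneg _)
      (Finset.self_mem_range_succ n)
  · intro h n
    choose C hC using h
    refine ⟨∑ i ∈ Finset.range n, |C i| + 1, by positivity, fun x => ?_⟩
    calc ∑ i ∈ Finset.range n, |a x i|
        ≤ ∑ i ∈ Finset.range n, |C i| * b x :=
          Finset.sum_le_sum fun i _ => (hC i x).trans (by gcongr; exacts [hb x, le_abs_self _])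
      _ ≤ (∑ i ∈ Finset.range n, |C i| + 1) * b x := by
          rw [← Finset.sum_mul]; nlinarith [hb x]

theorem stmt9_general {Y : Type*} [NormedAddCommGroup Y] [NormedSpace ℝ Y]
    (T : lp (fun _ : ℕ => ℝ) 1 →L[ℝ] Y) :
    (∀ n : ℕ, ∃ ν : ℝ, 0 < ν ∧ ∀ x : lp (fun _ : ℕ => ℝ) 1,
        (∑ i ∈ Finset.range n, |x i|) ≤ ν * ‖T x‖) ↔
    (∀ n : ℕ, ∃ ψ : StrongDual ℝ Y, ∀ x : lp (fun _ : ℕ => ℝ) 1, ψ (T x) = x n) := by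
  rw [exists_sum_range_abs_le_iff (fun x i => x i) (fun x => ‖T x‖) fun x => norm_nonneg _]
  exact forall_congr' fun n => (T.toLinearMap.exists_strongDual_comp_eq_iff (lp.evalₗ _ 1 n)).symm

/-- for an injective bounded linear operator T : ℓ¹ → Y, the condition
‖P_n x‖_{ℓ¹} ≤ ν_n ‖T x‖ (P_n the projection onto the first n coordinates) holds for
suitable constants ν_n iff every unit sequence e_n ∈ ℓ^∞ = (ℓ¹)* lies in the range of T*. -/
theorem stmt9 {Y : Type*} [NormedAddCommGroup Y] [NormedSpace ℝ Y] [CompleteSpace Y]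
    (T : lp (fun _ : ℕ => ℝ) 1 →L[ℝ] Y) (hT : Function.Injective T) :
    (∀ n : ℕ, ∃ ν : ℝ, 0 < ν ∧ ∀ x : lp (fun _ : ℕ => ℝ) 1,
        (∑ i ∈ Finset.range n, |x i|) ≤ ν * ‖T x‖) ↔
    (∀ n : ℕ, ∃ ψ : StrongDual ℝ Y, ∀ x : lp (fun _ : ℕ => ℝ) 1, ψ (T x) = x n) :=
  stmt9_general T
end

section
/- Let p ∈ [1,2], a > 0, s > 0, and suppose F : D ⊆ B⁰_{p,1} → Y satisfies ‖f₁−f₂‖_{−a,p,∞} ≤ L₁‖F(f₁)−F(f₂)‖_Y on D. Let f† ∈ D with ‖f†‖_{s,p,∞} ≤ ϱ. Then for all f ∈ D: ‖f − f†‖_{0,p,1} ≤ ‖f‖_{0,p,1} − ‖f†‖_{0,p,1} + C̃ inf_{n∈ℕ₀} ( (2^a−1)^{−1} L₁ 2^{a(n+1)} ‖F(f)−F(f†)‖_Y + (1−2^{−s})^{−1} 2^{−(n+1)s} ϱ ), with C̃ = 2. -/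
open Real

/-- the B⁰_{p,1} norm Σ_j 2^{jd(1/2−1/p)}‖Q_j f‖_p. -/
noncomputable def bNorm01 {Λ : ℕ → Type*} [∀ j, Fintype (Λ j)]
    (d : ℕ) (p : ℝ) (f : ∀ j, Λ j → ℝ) : ℝ :=
  ∑' j : ℕ, wt d p j * blockNorm p (f j)

lemma blockNorm_nonneg {Λ : Type*} [Fintype Λ] (p : ℝ) (v : Λ → ℝ) : 0 ≤ blockNorm p v :=
  Real.rpow_nonneg (Finset.sum_nonneg fun _ _ => Real.rpow_nonneg (abs_nonneg _) _) _

lemma blockNorm_add_le {Λ : Type*} [Fintype Λ] {p : ℝ} (hp : 1 ≤ p) (u v : Λ → ℝ) :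
    blockNorm p (u + v) ≤ blockNorm p u + blockNorm p v := by
  simpa [blockNorm] using Real.Lp_add_le Finset.univ u v hp

lemma blockNorm_neg {Λ : Type*} [Fintype Λ] (p : ℝ) (v : Λ → ℝ) :
    blockNorm p (-v) = blockNorm p v := by simp [blockNorm]

lemma wt_nonneg (d : ℕ) (p : ℝ) (j : ℕ) : 0 ≤ wt d p j :=
  (Real.rpow_pos_of_pos two_pos _).le

/-- variational source condition with explicit index function for
an at-most-a-times smoothing operator and f† ∈ B^s_{p,∞} with ‖f†‖_{s,p,∞} ≤ ϱ. -/
theorem stmt15 {Λ : ℕ → Type*} [∀ j, Fintype (Λ j)] {Y : Type*} [NormedAddCommGroup Y]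
    (d : ℕ) (hd : 1 ≤ d) (p a s ϱ L₁ : ℝ)
    (hp1 : 1 ≤ p) (hp2 : p ≤ 2) (ha : 0 < a) (hs : 0 < s) (hϱ : 0 < ϱ) (hL₁ : 0 < L₁)
    (D : Set (∀ j, Λ j → ℝ)) (hD : D.Nonempty)
    -- D ⊆ B⁰_{p,1}
    (hDB : ∀ f ∈ D, Summable (fun j : ℕ => wt d p j * blockNorm p (f j)))
    (F : (∀ j, Λ j → ℝ) → Y)
    -- Assumption: ‖f₁−f₂‖_{−a,p,∞} ≤ L₁ ‖F f₁ − F f₂‖ on D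
    (hop : ∀ f₁ ∈ D, ∀ f₂ ∈ D, ∀ j : ℕ,
      (2:ℝ) ^ (-(j:ℝ) * a) * wt d p j * blockNorm p (f₁ j - f₂ j) ≤ L₁ * ‖F f₁ - F f₂‖)
    (fdag : ∀ j, Λ j → ℝ) (hfdagD : fdag ∈ D)
    -- ‖f†‖_{s,p,∞} ≤ ϱ
    (hfdag : ∀ j : ℕ, (2:ℝ) ^ ((j:ℝ) * s) * wt d p j * blockNorm p (fdag j) ≤ ϱ) :
    ∀ f ∈ D, bNorm01 d p (f - fdag) ≤ bNorm01 d p f - bNorm01 d p fdag +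
      2 * ⨅ n : ℕ, (((2:ℝ) ^ a - 1)⁻¹ * L₁ * (2:ℝ) ^ (a * ((n:ℝ) + 1)) * ‖F f - F fdag‖
        + (1 - (2:ℝ) ^ (-s))⁻¹ * (2:ℝ) ^ (-((n:ℝ) + 1) * s) * ϱ) := by
  intro f hf
  set Fd : ℝ := ‖F f - F fdag‖ with hFddef
  have hFd0 : 0 ≤ Fd := norm_nonneg _
  set A : ℕ → ℝ := fun j => wt d p j * blockNorm p (f j) with hAdef
  set B : ℕ → ℝ := fun j => wt d p j * blockNorm p (fdag j) with hBdef
  set C : ℕ → ℝ := fun j => wt d p j * blockNorm p (f j - fdag j) with hCdef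
  have hA0 : ∀ j, 0 ≤ A j := fun j => mul_nonneg (wt_nonneg d p j) (blockNorm_nonneg _ _)
  have hB0 : ∀ j, 0 ≤ B j := fun j => mul_nonneg (wt_nonneg d p j) (blockNorm_nonneg _ _)
  have hC0 : ∀ j, 0 ≤ C j := fun j => mul_nonneg (wt_nonneg d p j) (blockNorm_nonneg _ _)
  have hCAB : ∀ j, C j ≤ A j + B j := by
    intro j
    have h1 : blockNorm p (f j - fdag j) ≤ blockNorm p (f j) + blockNorm p (fdag j) := by
      have := blockNorm_add_le hp1 (f j) (-(fdag j))
      rw [blockNorm_neg] at this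
      simpa [sub_eq_add_neg] using this
    calc C j ≤ wt d p j * (blockNorm p (f j) + blockNorm p (fdag j)) :=
          mul_le_mul_of_nonneg_left h1 (wt_nonneg d p j)
      _ = A j + B j := by rw [mul_add]
  have hBAC : ∀ j, B j ≤ A j + C j := by
    intro j
    have h1 : blockNorm p (fdag j) ≤ blockNorm p (f j) + blockNorm p (f j - fdag j) := by
      have := blockNorm_add_le hp1 (f j) (-(f j - fdag j))
      rw [blockNorm_neg] at this
      have e : f j + -(f j - fdag j) = fdag j := by ring
      rwa [e] at this
    calc B j ≤ wt d p j * (blockNorm p (f j) + blockNorm p (f j - fdag j)) :=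
          mul_le_mul_of_nonneg_left h1 (wt_nonneg d p j)
      _ = A j + C j := by rw [mul_add]
  have hAsum : Summable A := hDB f hf
  have hBsum : Summable B := hDB fdag hfdagD
  have hCsum : Summable C := Summable.of_nonneg_of_le hC0 hCAB (hAsum.add hBsum)
  -- the goal in terms of tsums
  have hgoal : bNorm01 d p (f - fdag) = ∑' j, C j := by
    simp only [bNorm01, hCdef, Pi.sub_apply]
  have hgA : bNorm01 d p f = ∑' j, A j := rfl
  have hgB : bNorm01 d p fdag = ∑' j, B j := rfl
  rw [hgoal, hgA, hgB]
  -- key estimate for every n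
  have hr1 : 1 < (2:ℝ)^a := (Real.one_lt_rpow_iff_of_pos two_pos).mpr (Or.inl ⟨one_lt_two, ha⟩)
  have hslt : (2:ℝ)^(-s) < 1 := Real.rpow_lt_one_of_one_lt_of_neg one_lt_two (by linarith)
  have hsnn : (0:ℝ) ≤ (2:ℝ)^(-s) := (Real.rpow_pos_of_pos two_pos _).le
  have key : ∀ n : ℕ, ∑' j, C j ≤ ∑' j, A j - ∑' j, B j +
      2 * (((2:ℝ) ^ a - 1)⁻¹ * L₁ * (2:ℝ) ^ (a * ((n:ℝ) + 1)) * Fd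
        + (1 - (2:ℝ) ^ (-s))⁻¹ * (2:ℝ) ^ (-((n:ℝ) + 1) * s) * ϱ) := by
    intro n
    -- summability of tails
    have hAtail : Summable (fun i => A (i + (n+1))) := (summable_nat_add_iff (n+1)).mpr hAsum
    have hBtail : Summable (fun i => B (i + (n+1))) := (summable_nat_add_iff (n+1)).mpr hBsum
    have hCtail : Summable (fun i => C (i + (n+1))) := (summable_nat_add_iff (n+1)).mpr hCsum
    have eA := (Summable.sum_add_tsum_nat_add (f := A) (n+1) hAsum)
    have eB := (Summable.sum_add_tsum_nat_add (f := B) (n+1) hBsum)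
    have eC := (Summable.sum_add_tsum_nat_add (f := C) (n+1) hCsum)
    -- tail comparison
    have h1 : ∑' i, C (i + (n+1)) ≤ ∑' i, A (i + (n+1)) + ∑' i, B (i + (n+1)) := by
      calc ∑' i, C (i + (n+1)) ≤ ∑' i, (A (i + (n+1)) + B (i + (n+1))) :=
            Summable.tsum_le_tsum (fun i => hCAB _) hCtail (hAtail.add hBtail)
        _ = _ := Summable.tsum_add hAtail hBtail
    -- head termwise bound via the operator
    have h2 : ∀ j : ℕ, C j ≤ ((2:ℝ)^a)^j * (L₁ * Fd) := by
      intro j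
      have h := hop f hf fdag hfdagD j
      have ht : (0:ℝ) < (2:ℝ)^((j:ℝ)*a) := Real.rpow_pos_of_pos two_pos _
      have e : (2:ℝ)^((j:ℝ)*a) * (2:ℝ)^(-(j:ℝ)*a) = 1 := by
        rw [← Real.rpow_add two_pos]
        norm_num
      have e2 : ((2:ℝ)^a)^j = (2:ℝ)^((j:ℝ)*a) := by
        rw [← Real.rpow_natCast ((2:ℝ)^a) j, ← Real.rpow_mul (by norm_num : (0:ℝ) ≤ 2)]
        ring_nf
      rw [e2]
      calc C j = ((2:ℝ)^((j:ℝ)*a) * (2:ℝ)^(-(j:ℝ)*a)) * wt d p j *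
            blockNorm p (f j - fdag j) := by rw [e, one_mul]
        _ = (2:ℝ)^((j:ℝ)*a) * ((2:ℝ)^(-(j:ℝ)*a) * wt d p j * blockNorm p (f j - fdag j)) := by
            ring
        _ ≤ (2:ℝ)^((j:ℝ)*a) * (L₁ * Fd) := mul_le_mul_of_nonneg_left h ht.le
    -- head sum bound
    have hrpos : (0:ℝ) < (2:ℝ)^a - 1 := by linarith
    have hXe : ((2:ℝ)^a)^(n+1) = (2:ℝ)^(a*((n:ℝ)+1)) := by
      rw [← Real.rpow_natCast ((2:ℝ)^a) (n+1), ← Real.rpow_mul (by norm_num : (0:ℝ) ≤ 2)]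
      push_cast
      ring_nf
    have hhead : (∑ j ∈ Finset.range (n+1), C j) + (∑ j ∈ Finset.range (n+1), B j)
        - (∑ j ∈ Finset.range (n+1), A j)
        ≤ 2 * (((2:ℝ) ^ a - 1)⁻¹ * L₁ * (2:ℝ) ^ (a * ((n:ℝ) + 1)) * Fd) := by
      have hterm : ∀ j ∈ Finset.range (n+1),
          C j + B j - A j ≤ 2 * (((2:ℝ)^a)^j * (L₁ * Fd)) := by
        intro j _
        have := hBAC j
        have := h2 j
        linarith
      have hsum := Finset.sum_le_sum hterm
      rw [Finset.sum_sub_distrib, Finset.sum_add_distrib] at hsum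
      have hgeo : ∑ j ∈ Finset.range (n+1), ((2:ℝ)^a)^j =
          (((2:ℝ)^a)^(n+1) - 1)/((2:ℝ)^a - 1) := geom_sum_eq (ne_of_gt hr1) (n+1)
      have hsum2 : ∑ j ∈ Finset.range (n+1), 2 * (((2:ℝ)^a)^j * (L₁ * Fd))
          = (∑ j ∈ Finset.range (n+1), ((2:ℝ)^a)^j) * (2 * (L₁ * Fd)) := by
        rw [Finset.sum_mul]
        congr 1; ext j; ring
      have hfin : (∑ j ∈ Finset.range (n+1), ((2:ℝ)^a)^j) * (2 * (L₁ * Fd))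
          ≤ 2 * (((2:ℝ) ^ a - 1)⁻¹ * L₁ * (2:ℝ) ^ (a * ((n:ℝ) + 1)) * Fd) := by
        rw [hgeo, ← hXe]
        have h1' : (((2:ℝ)^a)^(n+1) - 1)/((2:ℝ)^a - 1) ≤ ((2:ℝ)^a)^(n+1)/((2:ℝ)^a - 1) := by
          gcongr
          linarith
        have h2' : (0:ℝ) ≤ 2 * (L₁ * Fd) := by positivity
        calc (((2:ℝ)^a)^(n+1) - 1)/((2:ℝ)^a - 1) * (2 * (L₁ * Fd))
            ≤ ((2:ℝ)^a)^(n+1)/((2:ℝ)^a - 1) * (2 * (L₁ * Fd)) :=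
              mul_le_mul_of_nonneg_right h1' h2'
          _ = 2 * (((2:ℝ) ^ a - 1)⁻¹ * L₁ * ((2:ℝ)^a)^(n+1) * Fd) := by ring
      linarith [hsum, hsum2 ▸ hsum, hfin]
    -- tail bound for B
    have hgeos : Summable (fun i : ℕ => ((2:ℝ)^(-((n:ℝ)+1)*s) * ϱ) * ((2:ℝ)^(-s))^i) :=
      (summable_geometric_of_lt_one hsnn hslt).mul_left _
    have h4 : ∀ i : ℕ, B (i + (n+1)) ≤ ((2:ℝ)^(-((n:ℝ)+1)*s) * ϱ) * ((2:ℝ)^(-s))^i := by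
      intro i
      set j : ℕ := i + (n+1) with hjdef
      have h := hfdag j
      have ht : (0:ℝ) < (2:ℝ)^(-(j:ℝ)*s) := Real.rpow_pos_of_pos two_pos _
      have e : (2:ℝ)^(-(j:ℝ)*s) * (2:ℝ)^((j:ℝ)*s) = 1 := by
        rw [← Real.rpow_add two_pos]
        norm_num
      have hBle : B j ≤ (2:ℝ)^(-(j:ℝ)*s) * ϱ := by
        calc B j = ((2:ℝ)^(-(j:ℝ)*s) * (2:ℝ)^((j:ℝ)*s)) * wt d p j * blockNorm p (fdag j) := by
              rw [e, one_mul]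
          _ = (2:ℝ)^(-(j:ℝ)*s) * ((2:ℝ)^((j:ℝ)*s) * wt d p j * blockNorm p (fdag j)) := by ring
          _ ≤ (2:ℝ)^(-(j:ℝ)*s) * ϱ := mul_le_mul_of_nonneg_left h ht.le
      have e2 : (2:ℝ)^(-(j:ℝ)*s) = (2:ℝ)^(-((n:ℝ)+1)*s) * ((2:ℝ)^(-s))^i := by
        rw [← Real.rpow_natCast ((2:ℝ)^(-s)) i, ← Real.rpow_mul (by norm_num : (0:ℝ) ≤ 2),
          ← Real.rpow_add two_pos]
        rw [hjdef]
        push_cast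
        ring_nf
      calc B j ≤ (2:ℝ)^(-(j:ℝ)*s) * ϱ := hBle
        _ = ((2:ℝ)^(-((n:ℝ)+1)*s) * ϱ) * ((2:ℝ)^(-s))^i := by rw [e2]; ring
    have htail : ∑' i, B (i + (n+1)) ≤
        (1 - (2:ℝ) ^ (-s))⁻¹ * (2:ℝ) ^ (-((n:ℝ) + 1) * s) * ϱ := by
      calc ∑' i, B (i + (n+1)) ≤ ∑' i, ((2:ℝ)^(-((n:ℝ)+1)*s) * ϱ) * ((2:ℝ)^(-s))^i :=
            Summable.tsum_le_tsum h4 hBtail hgeos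
        _ = ((2:ℝ)^(-((n:ℝ)+1)*s) * ϱ) * (1 - (2:ℝ)^(-s))⁻¹ := by
            rw [tsum_mul_left, tsum_geometric_of_lt_one hsnn hslt]
        _ = (1 - (2:ℝ) ^ (-s))⁻¹ * (2:ℝ) ^ (-((n:ℝ) + 1) * s) * ϱ := by ring
    linarith [eA, eB, eC, h1, hhead, htail]
  -- glue with the infimum
  set g : ℕ → ℝ := fun n => ((2:ℝ) ^ a - 1)⁻¹ * L₁ * (2:ℝ) ^ (a * ((n:ℝ) + 1)) * Fd
    + (1 - (2:ℝ) ^ (-s))⁻¹ * (2:ℝ) ^ (-((n:ℝ) + 1) * s) * ϱ with hgdef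
  have hlb : (∑' j, C j - (∑' j, A j - ∑' j, B j)) / 2 ≤ ⨅ n, g n :=
    le_ciInf fun n => by have := key n; simp only [hgdef]; linarith
  linarith [hlb]
end

section
/- Let a > 0, s > 0, γ > 0, K > 0, and let f† be a sequence (blocks Q_j f† ∈ ℝ^{Λ_j}). Suppose that for every j ∈ ℕ₀ and every α > 0 with K√(2γ) α^{−a/(s+2a)} < 2^{ja} one has 2^{jd(1/2−1/p)} ‖Q_j f†‖_p ≤ γ α^{s/(s+2a)}. Then ‖f†‖_{s,p,∞} = sup_j 2^{sj} 2^{jd(1/2−1/p)} ‖Q_j f†‖_p ≤ γ^{(2a+s)/(2a)} (√2 K)^{s/a}, so f† ∈ B^s_{p,∞}. -/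
open Real

/-- key computation of the converse result: the level-wise bounds
obtained from the convergence rate imply ‖f†‖_{s,p,∞} ≤ γ^{(2a+s)/(2a)} (√2 K)^{s/a},
so f† ∈ B^s_{p,∞}. -/
theorem stmt19 {Λ : ℕ → Type*} [∀ j, Fintype (Λ j)]
    (d : ℕ) (hd : 1 ≤ d) (p a s γ K : ℝ)
    (hp1 : 1 ≤ p) (hp2 : p ≤ 2) (ha : 0 < a) (hs : 0 < s) (hγ : 0 < γ) (hK : 0 < K)
    (fdag : ∀ j, Λ j → ℝ)
    (hyp : ∀ (j : ℕ) (α : ℝ), 0 < α →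
      K * Real.sqrt (2 * γ) * α ^ (-(a / (s + 2 * a))) < (2:ℝ) ^ ((j:ℝ) * a) →
      wt d p j * blockNorm p (fdag j) ≤ γ * α ^ (s / (s + 2 * a))) :
    ∀ j : ℕ, (2:ℝ) ^ ((j:ℝ) * s) * wt d p j * blockNorm p (fdag j) ≤
      γ ^ ((2 * a + s) / (2 * a)) * (Real.sqrt 2 * K) ^ (s / a) := by

  intro j
  have hsa : 0 < s + 2 * a := by linarith
  set e := s / (s + 2 * a) with he
  set b := a / (s + 2 * a) with hb
  have hbpos : 0 < b := div_pos ha hsa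
  have hepos : 0 < e := div_pos hs hsa
  have hcpos : 0 < K * Real.sqrt (2 * γ) :=
    mul_pos hK (Real.sqrt_pos.2 (by linarith))
  set c := K * Real.sqrt (2 * γ) with hc
  have h2pos : (0:ℝ) < (2:ℝ) ^ (-((j:ℝ) * a)) := Real.rpow_pos_of_pos (by norm_num) _
  set α₀ : ℝ := (c * (2:ℝ) ^ (-((j:ℝ) * a))) ^ (1 / b) with hα₀
  have hbase : (0:ℝ) < c * (2:ℝ) ^ (-((j:ℝ) * a)) := mul_pos hcpos h2pos
  have hα₀pos : 0 < α₀ := Real.rpow_pos_of_pos hbase _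
  have hα₀b : α₀ ^ b = c * (2:ℝ) ^ (-((j:ℝ) * a)) := by
    rw [hα₀, ← Real.rpow_mul hbase.le, one_div, inv_mul_cancel₀ hbpos.ne', Real.rpow_one]
  have key : wt d p j * blockNorm p (fdag j) ≤ γ * α₀ ^ e := by
    have cont : Filter.Tendsto (fun α : ℝ => γ * α ^ e)
        (nhdsWithin α₀ (Set.Ioi α₀)) (nhds (γ * α₀ ^ e)) := by
      apply Filter.Tendsto.mono_left _ nhdsWithin_le_nhds
      exact ((Real.continuousAt_rpow_const α₀ e (Or.inl hα₀pos.ne')).const_smul γ)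
    refine ge_of_tendsto cont ?_
    filter_upwards [self_mem_nhdsWithin] with α (hα : α₀ < α)
    have hαpos : 0 < α := hα₀pos.trans hα
    apply hyp j α hαpos
    have hlt : α₀ ^ b < α ^ b := Real.rpow_lt_rpow hα₀pos.le hα hbpos
    rw [hα₀b] at hlt
    have h2ja : (0:ℝ) < (2:ℝ) ^ ((j:ℝ) * a) := Real.rpow_pos_of_pos (by norm_num) _
    rw [Real.rpow_neg hαpos.le]
    rw [Real.rpow_neg (by norm_num : (0:ℝ) ≤ 2)] at hlt
    have hαb : 0 < α ^ b := Real.rpow_pos_of_pos hαpos _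
    rw [← div_eq_mul_inv, div_lt_iff₀ hαb]
    rw [← div_eq_mul_inv, div_lt_iff₀ h2ja] at hlt
    exact hlt.trans_le (le_of_eq (mul_comm _ _))
  have hsub : (2:ℝ) ^ ((j:ℝ) * s) * (γ * α₀ ^ e) =
      γ ^ ((2 * a + s) / (2 * a)) * (Real.sqrt 2 * K) ^ (s / a) := by
    have h1 : α₀ ^ e = c ^ (s / a) * (2:ℝ) ^ (-((j:ℝ) * s)) := by
      rw [hα₀, ← Real.rpow_mul hbase.le]
      have hbe : 1 / b * e = s / a := by
        rw [hb, he]; field_simp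
      rw [hbe, Real.mul_rpow hcpos.le h2pos.le,
        ← Real.rpow_mul (by norm_num : (0:ℝ) ≤ 2)]
      congr 2
      first
      | (field_simp; ring)
      | field_simp
      | ring
    have h2 : c ^ (s / a) = (Real.sqrt 2 * K) ^ (s / a) * γ ^ (s / (2 * a)) := by
      have hceq : c = (Real.sqrt 2 * K) * Real.sqrt γ := by
        rw [hc, Real.sqrt_mul (by norm_num : (0:ℝ) ≤ 2) γ]; ring
      rw [hceq, Real.mul_rpow (by positivity) (Real.sqrt_nonneg γ)]
      congr 1
      rw [Real.sqrt_eq_rpow, ← Real.rpow_mul hγ.le]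
      congr 1
      first
      | (field_simp; ring)
      | field_simp
      | ring
    have h3 : γ * γ ^ (s / (2 * a)) = γ ^ ((2 * a + s) / (2 * a)) := by
      rw [← Real.rpow_one_add' hγ.le (by positivity : (0:ℝ) < 1 + s / (2 * a)).ne']
      congr 1
      first
      | (field_simp; ring)
      | field_simp
      | ring
    rw [h1, h2]
    rw [← h3]
    have h4 : (2:ℝ) ^ ((j:ℝ) * s) * (2:ℝ) ^ (-((j:ℝ) * s)) = 1 := by
      rw [← Real.rpow_add (by norm_num : (0:ℝ) < 2)]; simp
    calc (2:ℝ) ^ ((j:ℝ) * s) * (γ * ((Real.sqrt 2 * K) ^ (s / a) * γ ^ (s / (2 * a)) * (2:ℝ) ^ (-((j:ℝ) * s))))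
        = ((2:ℝ) ^ ((j:ℝ) * s) * (2:ℝ) ^ (-((j:ℝ) * s))) * (γ * γ ^ (s / (2 * a)) * (Real.sqrt 2 * K) ^ (s / a)) := by ring
      _ = γ * γ ^ (s / (2 * a)) * (Real.sqrt 2 * K) ^ (s / a) := by rw [h4, one_mul]
  calc (2:ℝ) ^ ((j:ℝ) * s) * wt d p j * blockNorm p (fdag j)
      = (2:ℝ) ^ ((j:ℝ) * s) * (wt d p j * blockNorm p (fdag j)) := by ring
    _ ≤ (2:ℝ) ^ ((j:ℝ) * s) * (γ * α₀ ^ e) := by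
        apply mul_le_mul_of_nonneg_left key (Real.rpow_pos_of_pos (by norm_num) _).le
    _ = _ := hsub
end
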